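/- If A, B, C are n×n complex matrices such that [[A, B], [B*, C]] is positive semidefinite, then for every j, s_j(B) ≤ s_j(A ⊕ C), where A ⊕ C denotes the block diagonal matrix diag(A, C). -/

import Mathlib

open Matrix
open scoped ComplexOrder

/-- The `j`-th largest singular value of a square complex matrix (`j : Fin m`, zero-indexed,
so `sv A 0` is the largest singular value). It is defined as the square root of the `j`-th
largest eigenvalue of `Aᴴ * A`. -/
noncomputable def sv {m : ℕ} (A : Matrix (Fin m) (Fin m) ℂ) (j : Fin m) : ℝ :=
  Real.sqrt ((Matrix.isHermitian_conjTranspose_mul_self A).eigenvalues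
    (Tuple.sort ((Matrix.isHermitian_conjTranspose_mul_self A).eigenvalues) j.rev))

/-- The positive semidefinite square root of a positive semidefinite matrix
(the definition of `Matrix.PosSemidef.sqrt` in the older Mathlib). -/
noncomputable def Matrix.PosSemidef.sqrt {m : ℕ} {A : Matrix (Fin m) (Fin m) ℂ}
    (hA : A.PosSemidef) : Matrix (Fin m) (Fin m) ℂ :=
  hA.1.eigenvectorUnitary.1 * diagonal ((↑) ∘ (√·) ∘ hA.1.eigenvalues) *
  (star hA.1.eigenvectorUnitary : Matrix (Fin m) (Fin m) ℂ)

theorem Matrix.PosSemidef.posSemidef_sqrt {m : ℕ} {A : Matrix (Fin m) (Fin m) ℂ}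
    (hA : A.PosSemidef) : hA.sqrt.PosSemidef := by
  unfold Matrix.PosSemidef.sqrt
  have h := (Matrix.PosSemidef.diagonal (R := ℂ) (n := Fin m)
    (d := ((↑) ∘ (√·) ∘ hA.1.eigenvalues : Fin m → ℂ)) (fun i => by
      simp only [Pi.zero_apply, Function.comp_apply]
      exact_mod_cast Real.sqrt_nonneg _)).mul_mul_conjTranspose_same
    (hA.1.eigenvectorUnitary.1)
  simpa [Matrix.star_eq_conjTranspose] using h

/-- The absolute value `|A| = (Aᴴ A)^{1/2}` of a square complex matrix. -/
noncomputable def matAbs {m : ℕ} (A : Matrix (Fin m) (Fin m) ℂ) : Matrix (Fin m) (Fin m) ℂ :=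
  (Matrix.posSemidef_conjTranspose_mul_self A).sqrt

/-- The `2n × 2n` block matrix `[[A, B], [C, D]]`, reindexed by `Fin (n + n)`. -/
noncomputable def blk {n : ℕ} (A B C D : Matrix (Fin n) (Fin n) ℂ) :
    Matrix (Fin (n + n)) (Fin (n + n)) ℂ :=
  Matrix.reindex finSumFinEquiv finSumFinEquiv (Matrix.fromBlocks A B C D)

/-- `f(P)` for a Hermitian matrix `P`, via the spectral functional calculus. -/
noncomputable def herCfc {m : ℕ} {P : Matrix (Fin m) (Fin m) ℂ} (hP : P.IsHermitian)
    (f : ℝ → ℝ) : Matrix (Fin m) (Fin m) ℂ :=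
  hP.cfc f

/-- `|A| ^ r` (real power of the absolute value), via the functional calculus. -/
noncomputable def matAbsPow {m : ℕ} (A : Matrix (Fin m) (Fin m) ℂ) (r : ℝ) :
    Matrix (Fin m) (Fin m) ℂ :=
  herCfc (Matrix.posSemidef_conjTranspose_mul_self A).posSemidef_sqrt.1 (fun t => t ^ r)

/-- `f(|A|)`, via the functional calculus. -/
noncomputable def matAbsCfc {m : ℕ} (A : Matrix (Fin m) (Fin m) ℂ) (f : ℝ → ℝ) :
    Matrix (Fin m) (Fin m) ℂ :=
  herCfc (Matrix.posSemidef_conjTranspose_mul_self A).posSemidef_sqrt.1 f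

/-- The operator norm: the largest singular value. -/
noncomputable def opNorm {m : ℕ} (A : Matrix (Fin m) (Fin m) ℂ) : ℝ :=
  ⨆ j, sv A j

/-! The Hermitian dilation `H = [[0, B], [Bᴴ, 0]]` lies below `A ⊕ C` in the Loewner order, since
`A ⊕ C - H = [[A, -B], [-Bᴴ, C]]` is the given positive block matrix conjugated by
`diag(1, -1)`. With `s = s_j(B)`, the quadratic form of `H` is at least `s ‖x‖²` on the
`(j+1)`-dimensional graph `{(s⁻¹ B v, v)}` over the top `j+1` right singular vectors of `B`, hence
so is that of `A ⊕ C`. By Cauchy–Schwarz `s ‖x‖ ≤ ‖(A ⊕ C) x‖` there, and the Courant–Fischer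
min-max principle for `(A ⊕ C)ᴴ (A ⊕ C)` gives `s ≤ s_j(A ⊕ C)`. -/

open Module Submodule RCLike
open scoped InnerProductSpace

namespace OrthonormalBasis

variable {𝕜 E ι : Type*} [RCLike 𝕜] [NormedAddCommGroup E] [InnerProductSpace 𝕜 E] [Fintype ι]
  {T : E →ₗ[𝕜] E} {b : OrthonormalBasis ι 𝕜 E} {d : ι → ℝ}

theorem inner_apply_of_apply_eq_smul (hb : ∀ i, T (b i) = (d i : 𝕜) • b i) (x : E) (i : ι) :
    ⟪b i, T x⟫_𝕜 = d i * ⟪b i, x⟫_𝕜 := by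
  classical
  conv_lhs => rw [← b.sum_repr' x]
  simp only [map_sum, map_smul, hb, smul_smul, inner_sum, inner_smul_right,
    orthonormal_iff_ite.mp b.orthonormal]
  simp [mul_comm]

theorem re_inner_apply_eq_sum (hb : ∀ i, T (b i) = (d i : 𝕜) • b i) (x : E) :
    re ⟪x, T x⟫_𝕜 = ∑ i, d i * ‖⟪b i, x⟫_𝕜‖ ^ 2 := by
  rw [← b.sum_inner_mul_inner, map_sum]
  refine Finset.sum_congr rfl fun i _ => ?_
  rw [inner_apply_of_apply_eq_smul hb, mul_left_comm, ← inner_conj_symm, RCLike.conj_mul,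
    ← ofReal_pow, ← ofReal_mul, ofReal_re]

theorem inner_eq_zero_of_mem_span_image {S : Set ι} {x : E} (hx : x ∈ span 𝕜 (b '' S)) {i : ι}
    (hi : i ∉ S) : ⟪b i, x⟫_𝕜 = 0 := by
  rw [← b.coe_toBasis, b.toBasis.mem_span_image] at hx
  rw [← b.repr_apply_apply, ← b.coe_toBasis_repr_apply]
  exact Finsupp.notMem_support_iff.mp fun h => hi (hx h)

theorem le_re_inner_of_mem_span_image (hb : ∀ i, T (b i) = (d i : 𝕜) • b i) {S : Set ι} {c : ℝ}
    (hc : ∀ i ∈ S, c ≤ d i) {x : E} (hx : x ∈ span 𝕜 (b '' S)) :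
    c * ‖x‖ ^ 2 ≤ re ⟪x, T x⟫_𝕜 := by
  rw [re_inner_apply_eq_sum hb, ← b.sum_sq_norm_inner_right, Finset.mul_sum]
  refine Finset.sum_le_sum fun i _ => ?_
  by_cases hi : i ∈ S
  · exact mul_le_mul_of_nonneg_right (hc i hi) (by positivity)
  · simp [inner_eq_zero_of_mem_span_image hx hi]

theorem re_inner_le_of_mem_span_image (hb : ∀ i, T (b i) = (d i : 𝕜) • b i) {S : Set ι} {c : ℝ}
    (hc : ∀ i ∈ S, d i ≤ c) {x : E} (hx : x ∈ span 𝕜 (b '' S)) :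
    re ⟪x, T x⟫_𝕜 ≤ c * ‖x‖ ^ 2 := by
  rw [re_inner_apply_eq_sum hb, ← b.sum_sq_norm_inner_right, Finset.mul_sum]
  refine Finset.sum_le_sum fun i _ => ?_
  by_cases hi : i ∈ S
  · exact mul_le_mul_of_nonneg_right (hc i hi) (by positivity)
  · simp [inner_eq_zero_of_mem_span_image hx hi]

theorem finrank_span_image (b : OrthonormalBasis ι 𝕜 E) (S : Finset ι) :
    finrank 𝕜 (span 𝕜 (b '' S)) = S.card := by
  rw [Set.image_eq_range, finrank_span_eq_card (b := fun i : (S : Set ι) => b i)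
    (b.orthonormal.comp _ Subtype.val_injective).linearIndependent]
  simp

variable {m : ℕ} {b : OrthonormalBasis (Fin m) 𝕜 E} {d : Fin m → ℝ}

theorem exists_finrank_eq_forall_le_re_inner (hb : ∀ i, T (b i) = (d i : 𝕜) • b i)
    (hd : Antitone d) (j : Fin m) :
    ∃ V : Submodule 𝕜 E, finrank 𝕜 V = j + 1 ∧ ∀ x ∈ V, d j * ‖x‖ ^ 2 ≤ re ⟪x, T x⟫_𝕜 :=
  ⟨span 𝕜 (b '' Finset.Iic j), by rw [finrank_span_image, Fin.card_Iic],
    fun _ hx => le_re_inner_of_mem_span_image hb (fun _ hi => hd (Finset.mem_Iic.mp hi)) hx⟩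

theorem le_of_forall_le_re_inner (hb : ∀ i, T (b i) = (d i : 𝕜) • b i) (hd : Antitone d)
    {j : Fin m} {V : Submodule 𝕜 E} (hV : j < finrank 𝕜 V) {c : ℝ}
    (hc : ∀ x ∈ V, c * ‖x‖ ^ 2 ≤ re ⟪x, T x⟫_𝕜) : c ≤ d j := by
  set W := span 𝕜 (b '' Finset.Ici j)
  have hW : finrank 𝕜 W = m - j := by rw [finrank_span_image, Fin.card_Ici]
  have := Module.Finite.of_basis b.toBasis
  have hE : finrank 𝕜 E = m := by simpa using finrank_eq_card_basis b.toBasis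
  -- `dim V + dim W > dim E`
  obtain ⟨x, hxV, hxW, hx⟩ : ∃ x ∈ V, x ∈ W ∧ x ≠ 0 := by
    by_contra! hVW
    have := Submodule.finrank_add_finrank_le_of_disjoint (disjoint_def.mpr hVW)
    omega
  have := (hc x hxV).trans
    (re_inner_le_of_mem_span_image hb (fun _ hi => hd (Finset.mem_Ici.mp hi)) hxW)
  exact le_of_mul_le_mul_right this (by positivity)

end OrthonormalBasis

namespace Matrix.IsHermitian

variable {𝕜 : Type*} [RCLike 𝕜] {m : ℕ} {P : Matrix (Fin m) (Fin m) 𝕜} (hP : P.IsHermitian)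

noncomputable def eigenvaluesDesc (j : Fin m) : ℝ :=
  hP.eigenvalues (Tuple.sort hP.eigenvalues j.rev)

theorem eigenvaluesDesc_antitone : Antitone hP.eigenvaluesDesc :=
  fun _ _ hij => Tuple.monotone_sort _ (Fin.rev_le_rev.mpr hij)

noncomputable def eigenvectorBasisDesc : OrthonormalBasis (Fin m) 𝕜 (EuclideanSpace 𝕜 (Fin m)) :=
  hP.eigenvectorBasis.reindex (Fin.revPerm.trans (Tuple.sort hP.eigenvalues)).symm

theorem toEuclideanLin_eigenvectorBasisDesc (j : Fin m) :
    toEuclideanLin P (hP.eigenvectorBasisDesc j) =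
      (hP.eigenvaluesDesc j : 𝕜) • hP.eigenvectorBasisDesc j := by
  rw [eigenvectorBasisDesc, OrthonormalBasis.reindex_apply, Equiv.symm_symm, toLpLin_apply,
    hP.mulVec_eigenvectorBasis, RCLike.real_smul_eq_coe_smul (K := 𝕜)]
  rfl

end Matrix.IsHermitian

theorem re_inner_toEuclideanLin_le_of_posSemidef_sub {𝕜 ι : Type*} [RCLike 𝕜] [Fintype ι]
    [DecidableEq ι] {P Q : Matrix ι ι 𝕜} (h : (Q - P).PosSemidef) (x : EuclideanSpace 𝕜 ι) :
    re ⟪x, toEuclideanLin P x⟫_𝕜 ≤ re ⟪x, toEuclideanLin Q x⟫_𝕜 := by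
  have := (isPositive_toEuclideanLin_iff.mpr h).re_inner_nonneg_right x
  rwa [map_sub, LinearMap.sub_apply, inner_sub_right, map_sub, sub_nonneg] at this

section SingularValues

variable {m : ℕ}

theorem re_inner_toEuclideanLin_conjTranspose_mul_self {𝕜 : Type*} [RCLike 𝕜]
    (M : Matrix (Fin m) (Fin m) 𝕜) (x : EuclideanSpace 𝕜 (Fin m)) :
    re ⟪x, toEuclideanLin (Mᴴ * M) x⟫_𝕜 = ‖toEuclideanLin M x‖ ^ 2 := by
  rw [toLpLin_mul_same, toEuclideanLin_conjTranspose_eq_adjoint, LinearMap.comp_apply,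
    LinearMap.adjoint_inner_right, inner_self_eq_norm_sq]

theorem exists_finrank_eq_forall_sv_mul_norm_le (M : Matrix (Fin m) (Fin m) ℂ) (j : Fin m) :
    ∃ V : Submodule ℂ (EuclideanSpace ℂ (Fin m)), finrank ℂ V = j + 1 ∧
      ∀ x ∈ V, sv M j * ‖x‖ ≤ ‖toEuclideanLin M x‖ := by
  have hM := isHermitian_conjTranspose_mul_self M
  obtain ⟨V, hV, hle⟩ := OrthonormalBasis.exists_finrank_eq_forall_le_re_inner
    hM.toEuclideanLin_eigenvectorBasisDesc hM.eigenvaluesDesc_antitone j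
  refine ⟨V, hV, fun x hx => ?_⟩
  have := Real.sqrt_le_sqrt ((hle x hx).trans_eq
    (re_inner_toEuclideanLin_conjTranspose_mul_self M x))
  rwa [Real.sqrt_mul' _ (by positivity), Real.sqrt_sq (norm_nonneg _),
    Real.sqrt_sq (norm_nonneg _)] at this

theorem le_sv_of_forall_le_re_inner (M : Matrix (Fin m) (Fin m) ℂ) {j : Fin m}
    {V : Submodule ℂ (EuclideanSpace ℂ (Fin m))} (hV : j < finrank ℂ V) {μ : ℝ} (hμ : 0 ≤ μ)
    (h : ∀ x ∈ V, μ * ‖x‖ ^ 2 ≤ re ⟪x, toEuclideanLin M x⟫_ℂ) : μ ≤ sv M j := by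
  have hM := isHermitian_conjTranspose_mul_self M
  have hsq : μ ^ 2 ≤ hM.eigenvaluesDesc j := by
    refine OrthonormalBasis.le_of_forall_le_re_inner hM.toEuclideanLin_eigenvectorBasisDesc
      hM.eigenvaluesDesc_antitone hV fun x hx => ?_
    have hnorm : μ * ‖x‖ ≤ ‖toEuclideanLin M x‖ := by
      rcases (norm_nonneg x).eq_or_lt with hx0 | hx0
      · rw [← hx0, mul_zero]; exact norm_nonneg _
      · refine le_of_mul_le_mul_right ?_ hx0
        calc μ * ‖x‖ * ‖x‖ = μ * ‖x‖ ^ 2 := by ring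
          _ ≤ re ⟪x, toEuclideanLin M x⟫_ℂ := h x hx
          _ ≤ ‖x‖ * ‖toEuclideanLin M x‖ := re_inner_le_norm _ _
          _ = ‖toEuclideanLin M x‖ * ‖x‖ := mul_comm _ _
    rw [re_inner_toEuclideanLin_conjTranspose_mul_self, ← mul_pow]
    exact pow_le_pow_left₀ (by positivity) hnorm 2
  exact Real.le_sqrt_of_sq_le hsq

end SingularValues

section BlockMatrices

variable {n : ℕ}

noncomputable def blkVec (u v : EuclideanSpace ℂ (Fin n)) : EuclideanSpace ℂ (Fin (n + n)) :=
  EuclideanSpace.finAddEquivProd.symm (u, v)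

theorem inner_blkVec (u v u' v' : EuclideanSpace ℂ (Fin n)) :
    ⟪blkVec u v, blkVec u' v'⟫_ℂ = ⟪u, u'⟫_ℂ + ⟪v, v'⟫_ℂ := by
  simp only [blkVec, EuclideanSpace.inner_eq_star_dotProduct, dotProduct, Fin.sum_univ_add]
  simp [-Fin.natAdd_eq_addNat]

theorem norm_blkVec_sq (u v : EuclideanSpace ℂ (Fin n)) :
    ‖blkVec u v‖ ^ 2 = ‖u‖ ^ 2 + ‖v‖ ^ 2 := by
  simp only [← inner_self_eq_norm_sq (𝕜 := ℂ), inner_blkVec, map_add]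

theorem toEuclideanLin_blk_blkVec (P Q R S : Matrix (Fin n) (Fin n) ℂ)
    (u v : EuclideanSpace ℂ (Fin n)) :
    toEuclideanLin (blk P Q R S) (blkVec u v) =
      blkVec (toEuclideanLin P u + toEuclideanLin Q v)
        (toEuclideanLin R u + toEuclideanLin S v) := by
  ext i
  refine Fin.addCases (fun i => ?_) (fun i => ?_) i <;>
    simp [blkVec, blk, toLpLin_apply, mulVec, dotProduct, Fin.sum_univ_add, -Fin.natAdd_eq_addNat]

theorem Matrix.PosSemidef.blk_sub_blk {A B C : Matrix (Fin n) (Fin n) ℂ}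
    (h : (blk A B Bᴴ C).PosSemidef) : (blk A 0 0 C - blk 0 B Bᴴ 0).PosSemidef := by
  have hM : (fromBlocks A B Bᴴ C).PosSemidef :=
    (posSemidef_submatrix_equiv finSumFinEquiv.symm).mp h
  let J : Matrix (Fin n ⊕ Fin n) (Fin n ⊕ Fin n) ℂ := fromBlocks 1 0 0 (-1)
  have hsign : fromBlocks A 0 0 C - fromBlocks 0 B Bᴴ 0 = Jᴴ * fromBlocks A B Bᴴ C * J := by
    simp [J, fromBlocks_multiply, fromBlocks_conjTranspose, sub_eq_add_neg, fromBlocks_neg,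
      fromBlocks_add]
  have hconj := hM.conjTranspose_mul_mul_same J
  rw [← hsign] at hconj
  exact hconj.submatrix finSumFinEquiv.symm

end BlockMatrices

section HermitianDilation

variable {n : ℕ}

theorem re_inner_blkVec_toEuclideanLin_blk (B : Matrix (Fin n) (Fin n) ℂ)
    (u v : EuclideanSpace ℂ (Fin n)) :
    re ⟪blkVec u v, toEuclideanLin (blk 0 B Bᴴ 0) (blkVec u v)⟫_ℂ =
      2 * re ⟪u, toEuclideanLin B v⟫_ℂ := by
  simp only [toEuclideanLin_blk_blkVec, map_zero, LinearMap.zero_apply, zero_add, add_zero,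
    inner_blkVec, toEuclideanLin_conjTranspose_eq_adjoint, LinearMap.adjoint_inner_right]
  rw [← inner_conj_symm u, map_add, conj_re, two_mul]

theorem exists_finrank_eq_forall_sv_mul_norm_sq_le_re_inner_blk (B : Matrix (Fin n) (Fin n) ℂ)
    (j : Fin n) :
    ∃ V : Submodule ℂ (EuclideanSpace ℂ (Fin (n + n))), finrank ℂ V = j + 1 ∧
      ∀ x ∈ V, sv B j * ‖x‖ ^ 2 ≤ re ⟪x, toEuclideanLin (blk 0 B Bᴴ 0) x⟫_ℂ := by
  obtain ⟨W, hW, hBW⟩ := exists_finrank_eq_forall_sv_mul_norm_le B j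
  set s := sv B j
  have hs : 0 ≤ s := Real.sqrt_nonneg _
  -- `v ↦ (s⁻¹ B v, v)`; for `s = 0` this is `v ↦ (0, v)`, which still works.
  let L : EuclideanSpace ℂ (Fin n) →ₗ[ℂ] EuclideanSpace ℂ (Fin (n + n)) :=
    EuclideanSpace.finAddEquivProd.symm.toLinearMap ∘ₗ (s⁻¹ • toEuclideanLin B).prod LinearMap.id
  have hL : Function.Injective L := fun v w hvw =>
    (Prod.ext_iff.mp (EuclideanSpace.finAddEquivProd.symm.injective hvw)).2
  refine ⟨W.map L, by rw [← (W.equivMapOfInjective L hL).finrank_eq, hW], ?_⟩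
  rintro _ ⟨v, hv, rfl⟩
  change s * ‖blkVec (s⁻¹ • toEuclideanLin B v) v‖ ^ 2 ≤ re ⟪blkVec (s⁻¹ • toEuclideanLin B v) v,
    toEuclideanLin (blk 0 B Bᴴ 0) (blkVec (s⁻¹ • toEuclideanLin B v) v)⟫_ℂ
  rw [re_inner_blkVec_toEuclideanLin_blk, norm_blkVec_sq, norm_smul,
    Real.norm_of_nonneg (inv_nonneg.mpr hs), inner_smul_left_eq_smul, smul_re,
    inner_self_eq_norm_sq]
  have hBv := hBW v hv
  rcases hs.eq_or_lt with hs0 | hs0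
  · simp [← hs0]
  · field_simp
    nlinarith [mul_le_mul hBv hBv (by positivity) (norm_nonneg _)]

end HermitianDilation

theorem offdiagonal_dominated {n : ℕ} (A B C : Matrix (Fin n) (Fin n) ℂ)
    (h : (blk A B Bᴴ C).PosSemidef) :
    ∀ j : Fin n, sv B j ≤ sv (blk A 0 0 C) (Fin.castAdd n j) := by
  intro j
  obtain ⟨V, hV, hBV⟩ := exists_finrank_eq_forall_sv_mul_norm_sq_le_re_inner_blk B j
  refine le_sv_of_forall_le_re_inner _ (V := V) (by simp [hV]) (Real.sqrt_nonneg _) fun x hx => ?_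
  exact (hBV x hx).trans (re_inner_toEuclideanLin_le_of_posSemidef_sub h.blk_sub_blk x)
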